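/- Let ℓ ≥ 3 be a prime, G a finite group, and H₁, H₂ ≤ G subgroups; form the wreath product G̃ = (Ω → ZMod ℓ) ⋊ G over Ω = G/H₁, the subgroups H̃₁ and H̃₂, and the character Ξ : H̃₁ → ℂˣ as in the context. Then H₁ and H₂ are conjugate subgroups of G if and only if there exists a group homomorphism χ : H̃₂ → ℂˣ such that the induced class functions Ind_{H̃₁}^{G̃} Ξ and Ind_{H̃₂}^{G̃} χ are equal as functions on G̃. -/

import Mathlib

/-- The action of `H` on `Multiplicative (Ω → ZMod ℓ)` permuting coordinates:
`(g • f)(x) = f(g⁻¹ • x)`. -/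
def wreathAct {H : Type*} [Group H] (Ω : Type*) [MulAction H Ω] (ℓ : ℕ) :
    H →* MulAut (Multiplicative (Ω → ZMod ℓ)) where
  toFun g :=
    { toFun := fun f => Multiplicative.ofAdd fun x => Multiplicative.toAdd f (g⁻¹ • x)
      invFun := fun f => Multiplicative.ofAdd fun x => Multiplicative.toAdd f (g • x)
      left_inv := fun f => by
        show Multiplicative.ofAdd (fun x => Multiplicative.toAdd f (g⁻¹ • g • x)) = f
        simp
      right_inv := fun f => by
        show Multiplicative.ofAdd (fun x => Multiplicative.toAdd f (g • g⁻¹ • x)) = f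
        simp
      map_mul' := fun f f' => rfl }
  map_one' := by
    apply MulEquiv.ext
    intro f
    show Multiplicative.ofAdd (fun x => Multiplicative.toAdd f ((1:H)⁻¹ • x)) = f
    simp
  map_mul' := fun a b => by
    apply MulEquiv.ext
    intro f
    show Multiplicative.ofAdd (fun x => Multiplicative.toAdd f ((a * b)⁻¹ • x))
      = Multiplicative.ofAdd (fun x => Multiplicative.toAdd f (b⁻¹ • a⁻¹ • x))
    simp [mul_smul]

/-- The wreath product `G̃ = (G/H₁ → ZMod ℓ) ⋊ G`, where `G` permutes the
coordinates as it permutes the left cosets of `H₁`. -/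
abbrev WreathG (G : Type*) [Group G] (H₁ : Subgroup G) (ℓ : ℕ) :=
  Multiplicative ((G ⧸ H₁) → ZMod ℓ) ⋊[wreathAct (G ⧸ H₁) ℓ] G

/-- The subgroup `H̃ = (G/H₁ → ZMod ℓ) ⋊ H` of the wreath product `G̃`. -/
def tildeSub {G : Type*} [Group G] (H₁ : Subgroup G) (ℓ : ℕ) (H : Subgroup G) :
    Subgroup (WreathG G H₁ ℓ) :=
  H.comap SemidirectProduct.rightHom

open scoped Classical in
/-- The class function induced from a function `φ` on a subgroup `H` of `Γ`:
`Ind_H^Γ φ (g) = (1/|H|) · Σ_{x ∈ Γ, x⁻¹gx ∈ H} φ(x⁻¹gx)`. -/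
noncomputable def inducedFun {Γ : Type*} [Group Γ] (H : Subgroup Γ) (φ : H → ℂ) : Γ → ℂ :=
  fun g => (1 / (Nat.card H : ℂ)) *
    ∑ᶠ x : Γ, if h : x⁻¹ * g * x ∈ H then φ ⟨x⁻¹ * g * x, h⟩ else 0

----------------------------------------------------------------------
-- my aux lemmas

open scoped Classical
set_option linter.unusedSectionVars false

lemma eq_of_mul_inv {y z w : ℂ} (h1 : y * w = 1) (h2 : z * w = 1) : y = z := by
  rw [eq_inv_of_mul_eq_one_left h1, eq_inv_of_mul_eq_one_left h2]

/-- conjugation hom between subgroups -/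
def conjHom {Γ : Type*} [Group Γ] {K K' : Subgroup Γ} (u : Γ)
    (h : ∀ w : Γ, w ∈ K' → u⁻¹ * w * u ∈ K) : K' →* K where
  toFun w := ⟨u⁻¹ * w * u, h w w.2⟩
  map_one' := Subtype.ext (by simp)
  map_mul' a b := Subtype.ext (by push_cast; group)

lemma inducedFun_conj {Γ : Type*} [Group Γ] [Finite Γ] {K K' : Subgroup Γ} (u : Γ)
    (h : ∀ w : Γ, w ∈ K' ↔ u⁻¹ * w * u ∈ K) (φ : K → ℂ) :
    inducedFun K' (fun w => φ ⟨u⁻¹ * w * u, (h w).1 w.2⟩) = inducedFun K φ := by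
  haveI := Fintype.ofFinite Γ
  have hcard : Nat.card K' = Nat.card K := Nat.card_congr
    { toFun := fun w => (⟨u⁻¹ * w * u, (h w).1 w.2⟩ : K)
      invFun := fun v => ⟨u * v * u⁻¹, (h _).2 (by
        have : u⁻¹ * (u * ↑v * u⁻¹) * u = (v : Γ) := by group
        rw [this]; exact v.2)⟩
      left_inv := fun w => Subtype.ext (by push_cast; group)
      right_inv := fun v => Subtype.ext (by push_cast; group) }
  set F : Γ → ℂ := fun z => if hz : z ∈ K then φ ⟨z, hz⟩ else 0 with hF
  have key : ∀ z : Γ,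
      (if hz : z ∈ K' then (fun w : K' => φ ⟨u⁻¹ * w * u, (h w).1 w.2⟩) ⟨z, hz⟩ else 0)
        = F (u⁻¹ * z * u) := by
    intro z
    by_cases hz : z ∈ K'
    · rw [dif_pos hz, hF]; simp only; rw [dif_pos ((h z).1 hz)]
    · rw [dif_neg hz, hF]; simp only; rw [dif_neg (fun hc => hz ((h z).2 hc))]
  funext g
  unfold inducedFun
  rw [hcard]
  congr 1
  rw [finsum_eq_sum_of_fintype, finsum_eq_sum_of_fintype]
  calc ∑ x : Γ, (if hx : x⁻¹ * g * x ∈ K'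
          then (fun w : K' => φ ⟨u⁻¹ * w * u, (h w).1 w.2⟩) ⟨x⁻¹ * g * x, hx⟩ else 0)
      = ∑ x : Γ, F (u⁻¹ * (x⁻¹ * g * x) * u) := by
        exact Finset.sum_congr rfl (fun x _ => key _)
    _ = ∑ y : Γ, F (y⁻¹ * g * y) := by
        apply Fintype.sum_equiv (Equiv.mulRight u)
        intro x
        simp only [Equiv.coe_mulRight]
        congr 1
        group
    _ = ∑ y : Γ, (if hy : y⁻¹ * g * y ∈ K then φ ⟨y⁻¹ * g * y, hy⟩ else 0) := rfl

section Wreath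

variable {G : Type*} [Group G] [Finite G] (ℓ : ℕ) [NeZero ℓ] (H₁ : Subgroup G)

lemma mem_tildeSub {H : Subgroup G} {w : WreathG G H₁ ℓ} :
    w ∈ tildeSub H₁ ℓ H ↔ w.right ∈ H := Iff.rfl

lemma inl_mem (H : Subgroup G) (a : Multiplicative ((G ⧸ H₁) → ZMod ℓ)) :
    SemidirectProduct.inl a ∈ tildeSub H₁ ℓ H := by
  rw [mem_tildeSub, SemidirectProduct.right_inl]; exact one_mem H

lemma conj_inl (x : WreathG G H₁ ℓ) (a : Multiplicative ((G ⧸ H₁) → ZMod ℓ)) :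
    x⁻¹ * SemidirectProduct.inl a * x
      = SemidirectProduct.inl ((wreathAct (G ⧸ H₁) ℓ) x.right⁻¹ a) := by
  apply SemidirectProduct.ext
  · simp only [SemidirectProduct.mul_left, SemidirectProduct.inv_left,
      SemidirectProduct.mul_right, SemidirectProduct.inv_right, SemidirectProduct.left_inl,
      SemidirectProduct.right_inl, one_mul, mul_one, map_one, inv_one, map_mul, map_inv]
    exact inv_mul_cancel_comm _ _
  · simp [SemidirectProduct.mul_right, SemidirectProduct.inv_right]

lemma card_tildeSub (H : Subgroup G) :
    Nat.card (tildeSub H₁ ℓ H)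
      = Nat.card (Multiplicative ((G ⧸ H₁) → ZMod ℓ)) * Nat.card H := by
  rw [← Nat.card_prod]
  exact Nat.card_congr
    { toFun := fun w => (w.1.left, ⟨w.1.right, w.2⟩)
      invFun := fun p => ⟨⟨p.1, p.2.1⟩, p.2.2⟩
      left_inv := fun w => rfl
      right_inv := fun p => rfl }

lemma sum_wreath (F : G → ℂ) :
    ∑ᶠ x : WreathG G H₁ ℓ, F x.right
      = (Nat.card (Multiplicative ((G ⧸ H₁) → ZMod ℓ)) : ℂ) * ∑ᶠ g : G, F g := by
  haveI := Fintype.ofFinite G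
  haveI := Fintype.ofFinite (Multiplicative ((G ⧸ H₁) → ZMod ℓ))
  haveI : Fintype (WreathG G H₁ ℓ) :=
    Fintype.ofEquiv (Multiplicative ((G ⧸ H₁) → ZMod ℓ) × G)
      { toFun := fun p => ⟨p.1, p.2⟩
        invFun := fun w => (w.left, w.right)
        left_inv := fun p => rfl
        right_inv := fun w => rfl }
  rw [finsum_eq_sum_of_fintype, finsum_eq_sum_of_fintype]
  rw [Fintype.sum_equiv
    (show WreathG G H₁ ℓ ≃ Multiplicative ((G ⧸ H₁) → ZMod ℓ) × G from
      { toFun := fun w => (w.left, w.right)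
        invFun := fun p => ⟨p.1, p.2⟩
        left_inv := fun w => rfl
        right_inv := fun p => rfl })
    (fun x => F x.right) (fun p => F p.2) (fun x => rfl)]
  calc ∑ p : Multiplicative ((G ⧸ H₁) → ZMod ℓ) × G, F p.2
      = ∑ _x : Multiplicative ((G ⧸ H₁) → ZMod ℓ), ∑ y : G, F y := by
        rw [Fintype.sum_prod_type]
    _ = (Fintype.card (Multiplicative ((G ⧸ H₁) → ZMod ℓ))) • ∑ y : G, F y := by
        rw [Finset.sum_const, Finset.card_univ]
    _ = (Nat.card (Multiplicative ((G ⧸ H₁) → ZMod ℓ)) : ℂ) * ∑ y : G, F y := by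
        rw [nsmul_eq_mul, Nat.card_eq_fintype_card]

end Wreath

----------------------------------------------------------------------
-- part 2

instance {N G' : Type*} [Group N] [Group G'] [Finite N] [Finite G'] {φ : G' →* MulAut N} :
    Finite (N ⋊[φ] G') :=
  Finite.of_equiv (N × G')
    ⟨fun p => ⟨p.1, p.2⟩, fun w => (w.left, w.right), fun p => rfl, fun w => rfl⟩

def actA {G : Type*} [Group G] (H₁ : Subgroup G) (ℓ : ℕ) (g : G)
    (v : (G ⧸ H₁) → ZMod ℓ) : (G ⧸ H₁) → ZMod ℓ :=
  fun ω => v (g⁻¹ • ω)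

section Wreath2

variable {G : Type*} [Group G] [Finite G] (ℓ : ℕ) [NeZero ℓ] (H₁ : Subgroup G)

lemma wreathAct_ofAdd (g : G) (v : (G ⧸ H₁) → ZMod ℓ) :
    (wreathAct (G ⧸ H₁) ℓ) g (Multiplicative.ofAdd v)
      = Multiplicative.ofAdd (actA H₁ ℓ g v) := rfl

lemma actA_add (g : G) (v w : (G ⧸ H₁) → ZMod ℓ) :
    actA H₁ ℓ g (v + w) = actA H₁ ℓ g v + actA H₁ ℓ g w := rfl

lemma actA_neg (g : G) (v : (G ⧸ H₁) → ZMod ℓ) :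
    actA H₁ ℓ g (-v) = -(actA H₁ ℓ g v) := rfl

lemma actA_actA (g g' : G) (v : (G ⧸ H₁) → ZMod ℓ) :
    actA H₁ ℓ g (actA H₁ ℓ g' v) = actA H₁ ℓ (g * g') v := by
  funext ω
  simp [actA, mul_smul]

lemma actA_apply (g : G) (v : (G ⧸ H₁) → ZMod ℓ) (ω : G ⧸ H₁) :
    actA H₁ ℓ g v ω = v (g⁻¹ • ω) := rfl

lemma induced_eval (H : Subgroup G) (φ : tildeSub H₁ ℓ H → ℂ) (v : (G ⧸ H₁) → ZMod ℓ) :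
    inducedFun (tildeSub H₁ ℓ H) φ (SemidirectProduct.inl (Multiplicative.ofAdd v))
      = (1 / (Nat.card H : ℂ)) *
        ∑ᶠ g : G, φ ⟨SemidirectProduct.inl (Multiplicative.ofAdd (actA H₁ ℓ g⁻¹ v)),
          inl_mem ℓ H₁ H _⟩ := by
  haveI := Fintype.ofFinite G
  unfold inducedFun
  rw [card_tildeSub]
  have hsum : ∑ᶠ x : WreathG G H₁ ℓ,
      (if h : x⁻¹ * SemidirectProduct.inl (Multiplicative.ofAdd v) * x ∈ tildeSub H₁ ℓ H
        then φ ⟨x⁻¹ * SemidirectProduct.inl (Multiplicative.ofAdd v) * x, h⟩ else 0)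
      = (Nat.card (Multiplicative ((G ⧸ H₁) → ZMod ℓ)) : ℂ) *
        ∑ᶠ g : G, φ ⟨SemidirectProduct.inl (Multiplicative.ofAdd (actA H₁ ℓ g⁻¹ v)),
          inl_mem ℓ H₁ H _⟩ := by
    rw [← sum_wreath ℓ H₁
      (fun g => φ ⟨SemidirectProduct.inl (Multiplicative.ofAdd (actA H₁ ℓ g⁻¹ v)),
        inl_mem ℓ H₁ H _⟩)]
    apply finsum_congr
    intro x
    have hc := conj_inl ℓ H₁ x (Multiplicative.ofAdd v)
    show (fun z : WreathG G H₁ ℓ =>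
        if hz : z ∈ tildeSub H₁ ℓ H then φ ⟨z, hz⟩ else 0)
        (x⁻¹ * SemidirectProduct.inl (Multiplicative.ofAdd v) * x) = _
    rw [hc, wreathAct_ofAdd]
    simp only
    rw [dif_pos (inl_mem ℓ H₁ H _)]
  rw [hsum, Nat.cast_mul]
  set NAc : ℂ := ((Nat.card (Multiplicative ((G ⧸ H₁) → ZMod ℓ)) : ℕ) : ℂ) with hNAc
  set NHc : ℂ := ((Nat.card H : ℕ) : ℂ) with hNHc
  set S : ℂ := ∑ᶠ g : G, φ ⟨SemidirectProduct.inl (Multiplicative.ofAdd (actA H₁ ℓ g⁻¹ v)),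
          inl_mem ℓ H₁ H _⟩ with hS
  have hNA : NAc ≠ 0 := Nat.cast_ne_zero.2 Nat.card_pos.ne'
  have hNH : NHc ≠ 0 := Nat.cast_ne_zero.2 Nat.card_pos.ne'
  field_simp

end Wreath2

lemma char_sum {α : Type*} [AddGroup α] [Finite α] (Y : α → ℂ)
    (hm : ∀ s t, Y (s + t) = Y s * Y t) (h0 : Y 0 = 1) :
    ∑ᶠ a, Y a = if ∀ a, Y a = 1 then (Nat.card α : ℂ) else 0 := by
  haveI := Fintype.ofFinite α
  rw [finsum_eq_sum_of_fintype]
  split_ifs with h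
  · simp only [h, Finset.sum_const, Finset.card_univ, nsmul_eq_mul, mul_one,
      Nat.card_eq_fintype_card]
  · push_neg at h
    obtain ⟨a₀, ha⟩ := h
    have h2 : ∑ a, Y a = Y a₀ * ∑ a, Y a := by
      rw [Finset.mul_sum]
      exact Fintype.sum_equiv (Equiv.addLeft (-a₀)) Y (fun a => Y a₀ * Y a) (fun x => by
        simp only [Equiv.coe_addLeft, ← hm, add_neg_cancel_left])
    have h3 : (Y a₀ - 1) * ∑ a, Y a = 0 := by linear_combination -h2
    rcases mul_eq_zero.1 h3 with h4 | h4
    · exact absurd (sub_eq_zero.1 h4) ha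
    · exact h4

lemma count_sum {G : Type*} [Finite G] (P : G → Prop) (c : ℂ) :
    ∑ᶠ g : G, (if P g then c else 0) = c * (Nat.card {g : G // P g}) := by
  haveI := Fintype.ofFinite G
  rw [finsum_eq_sum_of_fintype]
  calc ∑ g, (if P g then c else 0) = ∑ g, c * (if P g then (1:ℂ) else 0) := by
        simp [mul_ite]
    _ = c * ∑ g, (if P g then (1:ℂ) else 0) := by rw [Finset.mul_sum]
    _ = c * ((Finset.univ.filter P).card) := by rw [Finset.sum_boole]
    _ = c * Nat.card {g : G // P g} := by
        rw [Nat.card_eq_fintype_card, Fintype.card_subtype]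

lemma zpow_val_add {ℓ : ℕ} [NeZero ℓ] {ζ : ℂ} (hζ : ζ ^ ℓ = 1) (s t : ZMod ℓ) :
    ζ ^ (s + t).val = ζ ^ s.val * ζ ^ t.val := by
  rw [ZMod.val_add, ← pow_add]
  conv_rhs => rw [← Nat.mod_add_div (s.val + t.val) ℓ]
  rw [pow_add, pow_mul, hζ, one_pow, mul_one]

lemma pow_val_eq_one {ℓ : ℕ} [NeZero ℓ] {ζ : ℂ} (hζ : IsPrimitiveRoot ζ ℓ) {t : ZMod ℓ}
    (h : ζ ^ t.val = 1) : t = 0 := by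
  rw [hζ.pow_eq_one_iff_dvd] at h
  rw [← ZMod.val_eq_zero]
  exact Nat.eq_zero_of_dvd_of_lt h (ZMod.val_lt t)

lemma actA_one {G : Type*} [Group G] (H₁ : Subgroup G) (ℓ : ℕ) (v : (G ⧸ H₁) → ZMod ℓ) :
    actA H₁ ℓ 1 v = v := by
  funext ω; simp [actA]

section Counting

variable {G : Type*} [Group G] (H₁ : Subgroup G)

lemma card_coset (b : G) :
    Nat.card {g : G // (QuotientGroup.mk g : G ⧸ H₁) = QuotientGroup.mk b}
      = Nat.card H₁ :=
  Nat.card_congr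
    { toFun := fun g => ⟨b⁻¹ * g.1, by
        have := QuotientGroup.eq.1 g.2
        simpa using H₁.inv_mem this⟩
      invFun := fun h => ⟨b * h.1, QuotientGroup.eq.2 (by
        simpa using H₁.inv_mem h.2)⟩
      left_inv := fun g => Subtype.ext (by simp)
      right_inv := fun h => Subtype.ext (by simp) }

lemma card_conj_mem (b : G) :
    Nat.card {g : G // b⁻¹ * g * b ∈ H₁} = Nat.card H₁ :=
  Nat.card_congr
    { toFun := fun g => ⟨b⁻¹ * g.1 * b, g.2⟩
      invFun := fun h => ⟨b * h.1 * b⁻¹, by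
        convert h.2 using 2
        group⟩
      left_inv := fun g => Subtype.ext (by group)
      right_inv := fun h => Subtype.ext (by group) }

end Counting

lemma count_sum' {G : Type*} [Fintype G] (P : G → Prop) [DecidablePred P] (c : ℂ) :
    ∑ g : G, (if P g then c else 0) = c * (Nat.card {g : G // P g}) := by
  calc ∑ g, (if P g then c else 0) = ∑ g, c * (if P g then (1:ℂ) else 0) := by
        simp [mul_ite]
    _ = c * ∑ g, (if P g then (1:ℂ) else 0) := by rw [Finset.mul_sum]
    _ = c * ((Finset.univ.filter P).card) := by rw [Finset.sum_boole]
    _ = c * Nat.card {g : G // P g} := by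
        rw [Nat.card_eq_fintype_card, Fintype.card_subtype]

lemma div_eq_div_imp {c1 c2 x y : ℂ} (h1 : c1 ≠ 0) (h2 : c2 ≠ 0)
    (h : (1/c1) * x = (1/c2) * y) : c2 * x = c1 * y := by
  have h' := congrArg (fun z => (c1 * c2) * z) h
  calc c2 * x = c1 * c2 * ((1/c1) * x) := by field_simp
    _ = c1 * c2 * ((1/c2) * y) := h'
    _ = c1 * y := by field_simp

theorem stmt_12 {G : Type*} [Group G] [Finite G] (ℓ : ℕ) (hℓ : ℓ.Prime) (h3 : 3 ≤ ℓ)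
    (H₁ H₂ : Subgroup G)
    (Ξ : tildeSub H₁ ℓ H₁ →* ℂˣ)
    (hΞ : ∀ w : tildeSub H₁ ℓ H₁,
      (Ξ w : ℂ) = Complex.exp (2 * Real.pi * Complex.I *
        ((Multiplicative.toAdd (w : WreathG G H₁ ℓ).left (QuotientGroup.mk (1 : G))).val : ℂ)
          / ℓ)) :
    (∃ g : G, H₁.map (MulAut.conj g).toMonoidHom = H₂) ↔
      ∃ χ : tildeSub H₁ ℓ H₂ →* ℂˣ,
        inducedFun (tildeSub H₁ ℓ H₁) (fun w => (Ξ w : ℂ))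
          = inducedFun (tildeSub H₁ ℓ H₂) (fun w => (χ w : ℂ)) := by
  classical
  haveI : NeZero ℓ := ⟨by omega⟩
  haveI : Fact (1 < ℓ) := ⟨by omega⟩
  haveI := Fintype.ofFinite G
  haveI := Fintype.ofFinite ((G ⧸ H₁) → ZMod ℓ)
  constructor
  · -- forward direction
    rintro ⟨g, hg⟩
    set u : WreathG G H₁ ℓ := SemidirectProduct.inr g with hu
    have hmem : ∀ w : WreathG G H₁ ℓ,
        w ∈ tildeSub H₁ ℓ H₂ ↔ u⁻¹ * w * u ∈ tildeSub H₁ ℓ H₁ := by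
      intro w
      rw [mem_tildeSub, mem_tildeSub]
      have hr : (u⁻¹ * w * u).right = g⁻¹ * w.right * g := by
        simp [hu, SemidirectProduct.mul_right, SemidirectProduct.inv_right]
      rw [hr, ← hg, Subgroup.mem_map_equiv, MulAut.conj_symm_apply]
    exact ⟨Ξ.comp (conjHom u (fun w hw => (hmem w).1 hw)),
      (inducedFun_conj u hmem (fun w => (Ξ w : ℂ))).symm⟩
  · -- backward direction
    rintro ⟨χ, hInd⟩
    set ζ : ℂ := Complex.exp (2 * Real.pi * Complex.I / ℓ) with hzeta
    have hℓ0 : ℓ ≠ 0 := by omega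
    have hprim : IsPrimitiveRoot ζ ℓ := Complex.isPrimitiveRoot_exp ℓ hℓ0
    have hζℓ : ζ ^ ℓ = 1 := hprim.pow_eq_one
    set e : ZMod ℓ → ℂ := fun t => ζ ^ t.val with he
    have he0 : e 0 = 1 := by simp [he, ZMod.val_zero]
    have headd : ∀ s t, e (s + t) = e s * e t := fun s t => zpow_val_add hζℓ s t
    have heim : ∀ t, e t = 1 → t = 0 := fun t h => pow_val_eq_one hprim h
    have heneg : ∀ t, e t * e (-t) = 1 := fun t => by rw [← headd]; simp [he0]
    set ω₀ : G ⧸ H₁ := (QuotientGroup.mk (1 : G)) with homega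
    -- the restriction of χ to the base group
    set X : ((G ⧸ H₁) → ZMod ℓ) → ℂ := fun v =>
      ((χ ⟨SemidirectProduct.inl (Multiplicative.ofAdd v), inl_mem ℓ H₁ H₂ _⟩ : ℂˣ) : ℂ)
      with hXdef
    have hXadd : ∀ v w, X (v + w) = X v * X w := by
      intro v w
      have key : (⟨SemidirectProduct.inl (Multiplicative.ofAdd (v + w)),
            inl_mem ℓ H₁ H₂ _⟩ : tildeSub H₁ ℓ H₂)
          = ⟨SemidirectProduct.inl (Multiplicative.ofAdd v), inl_mem ℓ H₁ H₂ _⟩ *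
            ⟨SemidirectProduct.inl (Multiplicative.ofAdd w), inl_mem ℓ H₁ H₂ _⟩ := by
        apply Subtype.ext
        show SemidirectProduct.inl (Multiplicative.ofAdd (v + w))
          = SemidirectProduct.inl (Multiplicative.ofAdd v) *
            SemidirectProduct.inl (Multiplicative.ofAdd w)
        rw [← map_mul]
        rfl
      rw [hXdef]
      simp only
      rw [key, map_mul, Units.val_mul]
    have hX0 : X 0 = 1 := by
      have key : (⟨SemidirectProduct.inl (Multiplicative.ofAdd 0),
            inl_mem ℓ H₁ H₂ _⟩ : tildeSub H₁ ℓ H₂) = 1 := by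
        apply Subtype.ext
        show SemidirectProduct.inl (Multiplicative.ofAdd 0) = 1
        rw [show Multiplicative.ofAdd (0 : (G ⧸ H₁) → ZMod ℓ) = 1 from rfl, map_one]
      rw [hXdef]
      simp only
      rw [key, map_one, Units.val_one]
    have hXneg : ∀ v, X v * X (-v) = 1 := fun v => by
      rw [← hXadd]; simp [hX0]
    -- H₂-invariance of X
    have hXinv : ∀ h ∈ H₂, ∀ v, X (actA H₁ ℓ h⁻¹ v) = X v := by
      intro h hh v
      set y : tildeSub H₁ ℓ H₂ :=
        ⟨⟨1, h⟩, by rw [mem_tildeSub]; exact hh⟩ with hy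
      have hc : (⟨SemidirectProduct.inl (Multiplicative.ofAdd (actA H₁ ℓ h⁻¹ v)),
            inl_mem ℓ H₁ H₂ _⟩ : tildeSub H₁ ℓ H₂)
          = y⁻¹ * ⟨SemidirectProduct.inl (Multiplicative.ofAdd v), inl_mem ℓ H₁ H₂ _⟩ * y := by
        apply Subtype.ext
        push_cast
        rw [conj_inl ℓ H₁ (y : WreathG G H₁ ℓ) (Multiplicative.ofAdd v)]
        rfl
      rw [hXdef]
      simp only
      rw [hc, map_mul, map_mul, map_inv]
      rw [inv_mul_cancel_comm]
    -- main evaluation identity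
    have hEq : ∀ v : (G ⧸ H₁) → ZMod ℓ,
        (1 / (Nat.card H₁ : ℂ)) * ∑ g : G, e (v (QuotientGroup.mk g))
          = (1 / (Nat.card H₂ : ℂ)) * ∑ g : G, X (actA H₁ ℓ g⁻¹ v) := by
      intro v
      have h1 := congrFun hInd (SemidirectProduct.inl (Multiplicative.ofAdd v))
      rw [induced_eval ℓ H₁ H₁ _ v, induced_eval ℓ H₁ H₂ _ v,
        finsum_eq_sum_of_fintype, finsum_eq_sum_of_fintype] at h1
      have hL : ∀ g : G,
          ((Ξ ⟨SemidirectProduct.inl (Multiplicative.ofAdd (actA H₁ ℓ g⁻¹ v)),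
            inl_mem ℓ H₁ H₁ _⟩ : ℂˣ) : ℂ) = e (v (QuotientGroup.mk g)) := by
        intro g
        rw [hΞ]
        have harg : (Multiplicative.toAdd
            ((⟨SemidirectProduct.inl (Multiplicative.ofAdd (actA H₁ ℓ g⁻¹ v)),
              inl_mem ℓ H₁ H₁ _⟩ : tildeSub H₁ ℓ H₁) : WreathG G H₁ ℓ).left)
              (QuotientGroup.mk (1 : G)) = v (QuotientGroup.mk g) := by
          show (actA H₁ ℓ g⁻¹ v) (QuotientGroup.mk (1 : G)) = v (QuotientGroup.mk g)
          rw [actA_apply, inv_inv, MulAction.Quotient.smul_mk, smul_eq_mul, mul_one]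
        rw [harg, he]
        simp only
        rw [show ζ ^ (v (QuotientGroup.mk g)).val
            = Complex.exp ((((v (QuotientGroup.mk g)).val : ℂ)) *
              (2 * Real.pi * Complex.I / ℓ)) from by rw [← Complex.exp_nat_mul]]
        congr 1
        ring
      calc (1 / (Nat.card H₁ : ℂ)) * ∑ g : G, e (v (QuotientGroup.mk g))
          = (1 / (Nat.card H₁ : ℂ)) * ∑ g : G,
            ((Ξ ⟨SemidirectProduct.inl (Multiplicative.ofAdd (actA H₁ ℓ g⁻¹ v)),
              inl_mem ℓ H₁ H₁ _⟩ : ℂˣ) : ℂ) := by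
            rw [Finset.sum_congr rfl (fun g _ => (hL g).symm)]
        _ = (1 / (Nat.card H₂ : ℂ)) * ∑ g : G, X (actA H₁ ℓ g⁻¹ v) := h1
    -- pairing
    have hpair : ∀ W : ((G ⧸ H₁) → ZMod ℓ) → ℂ,
        (1 / (Nat.card H₁ : ℂ)) * ∑ g : G,
            ∑ v : (G ⧸ H₁) → ZMod ℓ, e (v (QuotientGroup.mk g)) * W v
          = (1 / (Nat.card H₂ : ℂ)) * ∑ g : G,
            ∑ v : (G ⧸ H₁) → ZMod ℓ, X (actA H₁ ℓ g⁻¹ v) * W v := by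
      intro W
      have flip : ∀ (c : ℂ) (T : G → ((G ⧸ H₁) → ZMod ℓ) → ℂ),
          c * ∑ g : G, ∑ v : (G ⧸ H₁) → ZMod ℓ, T g v * W v
            = ∑ v : (G ⧸ H₁) → ZMod ℓ, (c * ∑ g : G, T g v) * W v := by
        intro c T
        rw [Finset.sum_comm, Finset.mul_sum]
        refine Finset.sum_congr rfl fun v _ => ?_
        rw [← Finset.sum_mul, mul_assoc]
      rw [flip, flip]
      exact Finset.sum_congr rfl fun v _ => by rw [hEq v]
    -- condition massage helpers
    have hmassage : ∀ (Y Z : ((G ⧸ H₁) → ZMod ℓ) → ℂ), (∀ v, Z v * Z (-v) = 1) →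
        ((∀ v, Y v * Z (-v) = 1) ↔ (∀ v, Y v = Z v)) := by
      intro Y Z hZ
      constructor
      · intro h v; exact eq_of_mul_inv (h v) (hZ v)
      · intro h v; rw [h v]; exact hZ v
    have hdelta : ∀ ω ω' : G ⧸ H₁,
        (∀ v : (G ⧸ H₁) → ZMod ℓ, e (v ω) = e (v ω')) ↔ ω = ω' := by
      intro ω ω'
      constructor
      · intro hv
        by_contra hne
        have hind : e (if ω = ω then (1 : ZMod ℓ) else 0)
            = e (if ω' = ω then (1 : ZMod ℓ) else 0) := hv (fun x => if x = ω then 1 else 0)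
        rw [if_pos rfl, if_neg (fun hc => hne hc.symm), he0] at hind
        exact one_ne_zero (heim 1 hind)
      · rintro rfl
        exact fun _ => rfl
    -- nonvanishing
    have hN1 : ((Nat.card H₁ : ℕ) : ℂ) ≠ 0 := Nat.cast_ne_zero.2 Nat.card_pos.ne'
    have hN2 : ((Nat.card H₂ : ℕ) : ℂ) ≠ 0 := Nat.cast_ne_zero.2 Nat.card_pos.ne'
    have hM : ((Nat.card ((G ⧸ H₁) → ZMod ℓ) : ℕ) : ℂ) ≠ 0 := Nat.cast_ne_zero.2 Nat.card_pos.ne'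
    have hchar : ∀ (Y : ((G ⧸ H₁) → ZMod ℓ) → ℂ), (∀ s t, Y (s + t) = Y s * Y t) → Y 0 = 1 →
        ∑ v : (G ⧸ H₁) → ZMod ℓ, Y v
          = if ∀ v, Y v = 1 then (Nat.card ((G ⧸ H₁) → ZMod ℓ) : ℂ) else 0 := by
      intro Y hm h0
      rw [← finsum_eq_sum_of_fintype]
      convert char_sum Y hm h0 using 2
    have heZ : ∀ ω : G ⧸ H₁, ∀ v : (G ⧸ H₁) → ZMod ℓ, e (v ω) * e ((-v) ω) = 1 :=
      fun ω v => heneg (v ω)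
    -- Equation II
    have hinner1 : ∀ g : G,
        ∑ v : (G ⧸ H₁) → ZMod ℓ, e (v (QuotientGroup.mk g)) * e ((-v) ω₀)
          = if (QuotientGroup.mk g : G ⧸ H₁) = ω₀
              then (Nat.card ((G ⧸ H₁) → ZMod ℓ) : ℂ) else 0 := by
      intro g
      rw [hchar (fun v => e (v (QuotientGroup.mk g)) * e ((-v) ω₀))
        (fun s t => by simp only [neg_add, Pi.add_apply, headd]; ring)
        (by simp only [neg_zero, Pi.zero_apply, he0, mul_one])]
      exact if_congr (Iff.trans
        (hmassage (fun v => e (v (QuotientGroup.mk g))) (fun v => e (v ω₀)) (heZ ω₀))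
        (hdelta _ _)) rfl rfl
    have hinner2 : ∀ g : G,
        ∑ v : (G ⧸ H₁) → ZMod ℓ, X (actA H₁ ℓ g⁻¹ v) * e ((-v) ω₀)
          = if (∀ v, X (actA H₁ ℓ g⁻¹ v) = e (v ω₀))
              then (Nat.card ((G ⧸ H₁) → ZMod ℓ) : ℂ) else 0 := by
      intro g
      rw [hchar (fun v => X (actA H₁ ℓ g⁻¹ v) * e ((-v) ω₀))
        (fun s t => by
          simp only [neg_add, Pi.add_apply, headd, actA_add, hXadd]; ring)
        (by
          have h01 : actA H₁ ℓ g⁻¹ (0 : (G ⧸ H₁) → ZMod ℓ) = 0 := rfl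
          simp only [neg_zero, Pi.zero_apply, he0, mul_one, h01, hX0])]
      exact if_congr
        (hmassage (fun v => X (actA H₁ ℓ g⁻¹ v)) (fun v => e (v ω₀)) (heZ ω₀)) rfl rfl
    have eqII := hpair (fun v => e ((-v) ω₀))
    rw [Finset.sum_congr rfl (fun g _ => hinner1 g),
        Finset.sum_congr rfl (fun g _ => hinner2 g), count_sum', count_sum'] at eqII
    rw [card_coset H₁ 1] at eqII
    -- extract the count
    have hdivII := div_eq_div_imp hN1 hN2 eqII
    have hcnt3C : ((Nat.card {g : G // ∀ v, X (actA H₁ ℓ g⁻¹ v) = e (v ω₀)} : ℕ) : ℂ)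
        = ((Nat.card H₂ : ℕ) : ℂ) := by
      apply mul_left_cancel₀ (mul_ne_zero hM hN1)
      rw [homega] at hdivII ⊢
      linear_combination -hdivII
    have hcnt3 : Nat.card {g : G // ∀ v, X (actA H₁ ℓ g⁻¹ v) = e (v ω₀)} = Nat.card H₂ :=
      Nat.cast_inj.1 hcnt3C
    have hne3 : Nonempty {g : G // ∀ v, X (actA H₁ ℓ g⁻¹ v) = e (v ω₀)} := by
      have hnz : Nat.card {g : G // ∀ v, X (actA H₁ ℓ g⁻¹ v) = e (v ω₀)} ≠ 0 := by
        rw [hcnt3]; exact Nat.card_pos.ne'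
      exact (Nat.card_ne_zero.1 hnz).1
    obtain ⟨⟨a, ha⟩⟩ := hne3
    have hXe : ∀ v, X v = e (v (QuotientGroup.mk a⁻¹)) := by
      intro v
      have h' := ha (actA H₁ ℓ a v)
      rw [actA_actA, inv_mul_cancel, actA_one] at h'
      rw [h']
      have harg : (actA H₁ ℓ a v) ω₀ = v (QuotientGroup.mk a⁻¹) := by
        rw [actA_apply, homega, MulAction.Quotient.smul_mk, smul_eq_mul, mul_one]
      rw [harg]
    set b := a⁻¹ with hb
    -- the conjugation condition
    have hP2 : ∀ g : G, (∀ v, X (actA H₁ ℓ g⁻¹ v) = X v) ↔ b⁻¹ * g * b ∈ H₁ := by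
      intro g
      constructor
      · intro h
        have h' : ∀ v : (G ⧸ H₁) → ZMod ℓ,
            e (v (g • (QuotientGroup.mk b : G ⧸ H₁))) = e (v (QuotientGroup.mk b)) := by
          intro v
          have hv := h v
          rw [hXe, hXe] at hv
          rwa [actA_apply, inv_inv] at hv
        have hsm := (hdelta _ _).1 h'
        rw [MulAction.Quotient.smul_mk, smul_eq_mul] at hsm
        have hmm := QuotientGroup.eq.1 hsm
        have hrw : b⁻¹ * g * b = ((g * b)⁻¹ * b)⁻¹ := by group
        rw [hrw]
        exact H₁.inv_mem hmm
      · intro hgb v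
        rw [hXe, hXe, actA_apply, inv_inv]
        have hsm : g • (QuotientGroup.mk b : G ⧸ H₁) = QuotientGroup.mk b := by
          rw [MulAction.Quotient.smul_mk, smul_eq_mul]
          apply QuotientGroup.eq.2
          have hrw : (g * b)⁻¹ * b = (b⁻¹ * g * b)⁻¹ := by group
          rw [hrw]
          exact H₁.inv_mem hgb
        rw [hsm]
    -- Equation I
    have hinner3 : ∀ g : G,
        ∑ v : (G ⧸ H₁) → ZMod ℓ, e (v (QuotientGroup.mk g)) * X (-v)
          = if (QuotientGroup.mk g : G ⧸ H₁) = QuotientGroup.mk b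
              then (Nat.card ((G ⧸ H₁) → ZMod ℓ) : ℂ) else 0 := by
      intro g
      rw [hchar (fun v => e (v (QuotientGroup.mk g)) * X (-v))
        (fun s t => by simp only [neg_add, Pi.add_apply, headd, hXadd]; ring)
        (by simp only [neg_zero, Pi.zero_apply, he0, hX0, mul_one])]
      refine if_congr (Iff.trans
        (hmassage (fun v => e (v (QuotientGroup.mk g))) X hXneg) ?_) rfl rfl
      constructor
      · intro h
        exact (hdelta _ _).1 (fun v => (h v).trans (hXe v))
      · intro h v
        rw [hXe v]
        exact (hdelta _ _).2 h v
    have hinner4 : ∀ g : G,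
        ∑ v : (G ⧸ H₁) → ZMod ℓ, X (actA H₁ ℓ g⁻¹ v) * X (-v)
          = if b⁻¹ * g * b ∈ H₁
              then (Nat.card ((G ⧸ H₁) → ZMod ℓ) : ℂ) else 0 := by
      intro g
      rw [hchar (fun v => X (actA H₁ ℓ g⁻¹ v) * X (-v))
        (fun s t => by simp only [neg_add, actA_add, hXadd]; ring)
        (by
          have h01 : actA H₁ ℓ g⁻¹ (0 : (G ⧸ H₁) → ZMod ℓ) = 0 := rfl
          simp only [neg_zero, h01, hX0, mul_one])]
      exact if_congr (Iff.trans
        (hmassage (fun v => X (actA H₁ ℓ g⁻¹ v)) X hXneg) (hP2 g)) rfl rfl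
    have eqI := hpair (fun v => X (-v))
    rw [Finset.sum_congr rfl (fun g _ => hinner3 g),
        Finset.sum_congr rfl (fun g _ => hinner4 g), count_sum', count_sum',
        card_coset H₁ b, card_conj_mem H₁ b] at eqI
    have hdivI := div_eq_div_imp hN1 hN2 eqI
    have hNN : ((Nat.card H₂ : ℕ) : ℂ) = ((Nat.card H₁ : ℕ) : ℂ) := by
      apply mul_right_cancel₀ (mul_ne_zero hM hN1)
      linear_combination hdivI
    have hNNn : Nat.card H₂ = Nat.card H₁ := Nat.cast_inj.1 hNN
    -- conclusion
    refine ⟨b, ?_⟩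
    have hle : H₂ ≤ H₁.map (MulAut.conj b).toMonoidHom := by
      intro h hh
      rw [Subgroup.mem_map_equiv, MulAut.conj_symm_apply]
      exact (hP2 h).1 (hXinv h hh)
    have hcard : Nat.card (H₁.map (MulAut.conj b).toMonoidHom) ≤ Nat.card H₂ := by
      have hmapc : Nat.card (H₁.map (MulAut.conj b).toMonoidHom) = Nat.card H₁ :=
        (Nat.card_congr (H₁.equivMapOfInjective _ (MulAut.conj b).injective).toEquiv).symm
      rw [hmapc, ← hNNn]
    exact (Subgroup.eq_of_le_of_card_ge hle hcard).symm
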